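/- Fix ε > 0 and w ∈ ℝ^L. Then w ∈ R_j^ε if and only if argmax^ε(w) = {j}. -/

import Mathlib

noncomputable section

/-- The set `R_j^ε = {w ∈ ℝ^L : w_j ≥ max_{ℓ≠j} w_ℓ + ε/√2}`. -/
def Rset (L : ℕ) (ε : ℝ) (j : Fin L) : Set (EuclideanSpace ℝ (Fin L)) :=
  {w | ∀ ℓ : Fin L, ℓ ≠ j → w ℓ + ε / Real.sqrt 2 ≤ w j}

/-- The inflated argmax: `argmax^ε(w) = {j ∈ [L] : dist(w, R_j^ε) < ε}`. -/
def inflatedArgmax (L : ℕ) (ε : ℝ) (w : EuclideanSpace ℝ (Fin L)) : Set (Fin L) :=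
  {j | Metric.infDist w (Rset L ε j) < ε}

/-! Write `δ = ε/√2`. If `w ∈ R_j^ε` and `v ∈ R_k^ε` with `k ≠ j`, then
`(w_j - v_j) - (w_k - v_k) ≥ 2δ`, so the two coordinates `j, k` alone already force
`‖w - v‖² ≥ (2δ)²/2 = ε²`; hence `argmax^ε(w) = {j}`. Conversely, if `w ∉ R_j^ε`,
let `k ≠ j` maximise `w` off `j`, so `w_j < w_k + δ`. Raising `w_k` by `δ` and lowering
`w_j` to `min w_j w_k` (by less than `δ`) lands in `R_k^ε` at distance `< √2 δ = ε`,
so `k ∈ argmax^ε(w)`. -/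

open Real

section EuclideanSpace

variable {𝕜 ι : Type*} [RCLike 𝕜] [Fintype ι] {j k : ι}

theorem EuclideanSpace.dist_sq_pair_le (hjk : j ≠ k) (x y : EuclideanSpace 𝕜 ι) :
    dist (x j) (y j) ^ 2 + dist (x k) (y k) ^ 2 ≤ dist x y ^ 2 := by
  classical
  rw [EuclideanSpace.dist_sq_eq, ← Finset.sum_pair (f := fun i => dist (x i) (y i) ^ 2) hjk]
  exact Finset.sum_le_sum_of_subset_of_nonneg (Finset.subset_univ _) fun _ _ _ => by positivity

theorem EuclideanSpace.dist_sq_eq_pair (hjk : j ≠ k) {x y : EuclideanSpace 𝕜 ι}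
    (h : ∀ i, i ≠ j → i ≠ k → x i = y i) :
    dist x y ^ 2 = dist (x j) (y j) ^ 2 + dist (x k) (y k) ^ 2 := by
  classical
  rw [EuclideanSpace.dist_sq_eq, ← Finset.sum_pair (f := fun i => dist (x i) (y i) ^ 2) hjk]
  refine (Finset.sum_subset (Finset.subset_univ _) fun i _ hi => ?_).symm
  simp only [Finset.mem_insert, Finset.mem_singleton, not_or] at hi
  simp [h i hi.1 hi.2]

end EuclideanSpace

theorem div_sqrt_two_sq (x : ℝ) : (x / √2) ^ 2 = x ^ 2 / 2 := by
  rw [div_pow, sq_sqrt zero_le_two]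

theorem exists_forall_ne_le {ι α : Type*} [Fintype ι] [LinearOrder α] (f : ι → α)
    {j ℓ : ι} (hℓ : ℓ ≠ j) : ∃ k, k ≠ j ∧ ∀ i, i ≠ j → f i ≤ f k := by
  classical
  obtain ⟨k, hk, hmax⟩ :=
    (Finset.univ.erase j).exists_max_image f
      ⟨ℓ, Finset.mem_erase.2 ⟨hℓ, Finset.mem_univ _⟩⟩
  exact ⟨k, Finset.ne_of_mem_erase hk,
    fun i hi => hmax i (Finset.mem_erase.2 ⟨hi, Finset.mem_univ _⟩)⟩

theorem Rset_nonempty (L : ℕ) (ε : ℝ) (k : Fin L) : (Rset L ε k).Nonempty :=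
  ⟨WithLp.toLp 2 fun ℓ => if ℓ = k then ε / √2 else 0, fun ℓ hℓ => by simp [hℓ]⟩

section Rset

variable {L : ℕ} {ε : ℝ}

theorem le_dist_of_mem_Rset {j k : Fin L} (hkj : k ≠ j) {w v : EuclideanSpace ℝ (Fin L)}
    (hw : w ∈ Rset L ε j) (hv : v ∈ Rset L ε k) : ε ≤ dist w v := by
  rcases le_or_gt ε 0 with hε | hε
  · exact hε.trans dist_nonneg
  have hgap : 2 * (ε / √2) ≤ (w j - v j) - (w k - v k) := by
    linarith [hw k hkj, hv j hkj.symm]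
  have hcoord : ε ^ 2 ≤ dist (w j) (v j) ^ 2 + dist (w k) (v k) ^ 2 := by
    rw [Real.dist_eq, Real.dist_eq, sq_abs, sq_abs]
    nlinarith [div_sqrt_two_sq ε, sq_nonneg (w j - v j + (w k - v k)),
      pow_le_pow_left₀ (by positivity) hgap 2]
  exact (pow_le_pow_iff_left₀ hε.le dist_nonneg two_ne_zero).1
    (hcoord.trans (EuclideanSpace.dist_sq_pair_le hkj.symm w v))

theorem le_infDist_Rset_of_mem_Rset {j k : Fin L} (hkj : k ≠ j) {w : EuclideanSpace ℝ (Fin L)}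
    (hw : w ∈ Rset L ε j) : ε ≤ Metric.infDist w (Rset L ε k) :=
  (Metric.le_infDist (Rset_nonempty L ε k)).2 fun _ hv => le_dist_of_mem_Rset hkj hw hv

theorem mem_inflatedArgmax_of_lt_add {j k : Fin L} (hε : 0 < ε) (hjk : j ≠ k)
    {w : EuclideanSpace ℝ (Fin L)} (hmax : ∀ ℓ, ℓ ≠ j → w ℓ ≤ w k)
    (hnear : w j < w k + ε / √2) : k ∈ inflatedArgmax L ε w := by
  have hδ : 0 < ε / √2 := by positivity
  set u : EuclideanSpace ℝ (Fin L) := WithLp.toLp 2 fun ℓ =>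
    if ℓ = k then w k + ε / √2 else if ℓ = j then min (w j) (w k) else w ℓ
  have huk : u k = w k + ε / √2 := by simp [u]
  have huj : u j = min (w j) (w k) := by simp [u, hjk]
  have hu : ∀ ℓ, ℓ ≠ j → ℓ ≠ k → w ℓ = u ℓ := fun ℓ hℓj hℓk => by
    simp [u, hℓj, hℓk]
  have hmem : u ∈ Rset L ε k := by
    intro ℓ hℓ
    rcases eq_or_ne ℓ j with rfl | hℓj
    · rw [huj, huk]
      linarith [min_le_right (w ℓ) (w k)]
    · rw [← hu ℓ hℓj hℓ, huk]
      linarith [hmax ℓ hℓj]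
  have hj : dist (w j) (u j) < ε / √2 := by
    rw [huj, Real.dist_eq, abs_of_nonneg (sub_nonneg.2 (min_le_left _ _))]
    rcases le_total (w j) (w k) with h | h
    · rw [min_eq_left h, sub_self]; exact hδ
    · rw [min_eq_right h]; linarith
  have hk : dist (w k) (u k) = ε / √2 := by
    rw [huk, Real.dist_eq, sub_add_cancel_left, abs_neg, abs_of_pos hδ]
  have hdist : dist w u < ε := by
    refine (pow_lt_pow_iff_left₀ dist_nonneg hε.le two_ne_zero).1 ?_
    rw [EuclideanSpace.dist_sq_eq_pair hjk hu, hk]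
    nlinarith [div_sqrt_two_sq ε, pow_lt_pow_left₀ hj dist_nonneg two_ne_zero]
  exact (Metric.infDist_lt_iff ⟨u, hmem⟩).2 ⟨u, hmem, hdist⟩

end Rset

theorem mem_Rset_iff_inflatedArgmax_singleton_general (L : ℕ) (ε : ℝ)
    (hε : 0 < ε) (w : EuclideanSpace ℝ (Fin L)) (j : Fin L) :
    w ∈ Rset L ε j ↔ inflatedArgmax L ε w = {j} := by
  constructor
  · intro hw
    ext k
    refine ⟨fun hk => by_contra fun hkj => (le_infDist_Rset_of_mem_Rset hkj hw).not_gt hk, ?_⟩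
    rintro rfl
    simpa [inflatedArgmax, Metric.infDist_zero_of_mem hw] using hε
  · intro h
    by_contra hw
    obtain ⟨ℓ, hℓj, hℓ⟩ : ∃ ℓ, ℓ ≠ j ∧ w j < w ℓ + ε / √2 := by
      simpa [Rset] using hw
    obtain ⟨k, hkj, hmax⟩ := exists_forall_ne_le w hℓj
    have hk : k ∈ inflatedArgmax L ε w :=
      mem_inflatedArgmax_of_lt_add hε hkj.symm hmax (hℓ.trans_le (by linarith [hmax ℓ hℓj]))
    exact hkj (by rwa [h] at hk)

/-- `w ∈ R_j^ε` if and only if `argmax^ε(w) = {j}`. -/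
theorem mem_Rset_iff_inflatedArgmax_singleton (L : ℕ) (hL : 2 ≤ L) (ε : ℝ)
    (hε : 0 < ε) (w : EuclideanSpace ℝ (Fin L)) (j : Fin L) :
    w ∈ Rset L ε j ↔ inflatedArgmax L ε w = {j} :=
  mem_Rset_iff_inflatedArgmax_singleton_general L ε hε w j
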